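/- Let K be an algebraically closed field of characteristic zero, W an n-dimensional K-vector space, and p a natural number. Let φ_p : K[S_p] → End_K(W^{⊗p}) be the algebra homomorphism sending σ ∈ S_p to the permutation operator L_σ(w_1 ⊗ ⋯ ⊗ w_p) = w_{σ^{-1}(1)} ⊗ ⋯ ⊗ w_{σ^{-1}(p)}. If p ≤ n then φ_p is injective. If p > n then the kernel of φ_p is the two-sided ideal of K[S_p] generated by the antisymmetrizer A_{n+1} = (1/(n+1)!) Σ_{σ ∈ S_{n+1}} sgn(σ)σ, where S_{n+1} is embedded in S_p as the permutations fixing the letters n+2, …, p. -/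

import Mathlib

/-!
Call `σ ∈ S_p` `n`-colorable if the letters can be colored with `n` colors so that `σ` increases
on every color class. Coloring each letter by the length of the longest decreasing subsequence of
`σ` ending there shows that `σ` is `n`-colorable unless it has a decreasing subsequence of length
`n + 1`.

If `c` colors the lexicographically largest permutation `σ` in the support of `a`, then the
coordinate of `φ_p(a) (e_{c 1} ⊗ ⋯ ⊗ e_{c p})` along `e_{c(σ⁻¹ 1)} ⊗ ⋯ ⊗ e_{c(σ⁻¹ p)}` is the
coefficient of `σ` in `a`; hence `φ_p` is injective on the span of the `n`-colorable permutations.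
For `p ≤ n` every permutation is `n`-colorable.

For `p > n`, the antisymmetrizer of any `n + 1` letters is conjugate to `A_{n+1}` and is killed by
`φ_p`, since two of those letters carry the same basis vector. If `σ` decreases along the letters
`s`, then `σ · A_s = σ + (lexicographically smaller permutations)`, so modulo `(A_{n+1})` every
permutation reduces to `n`-colorable ones, and the kernel is `(A_{n+1})`.
-/

open scoped TensorProduct

universe u

/-- The permutation operator `L_σ : w₁ ⊗ ⋯ ⊗ w_p ↦ w_{σ⁻¹(1)} ⊗ ⋯ ⊗ w_{σ⁻¹(p)}` on the
`p`-th tensor power, as a monoid homomorphism `S_p →* End(W^{⊗p})`. -/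
noncomputable def permRep (K : Type u) [Field K] (W : Type u) [AddCommGroup W] [Module K W]
    (p : ℕ) : Equiv.Perm (Fin p) →* Module.End K (⨂[K] (_ : Fin p), W) where
  toFun σ := (PiTensorProduct.reindex K (fun _ : Fin p => W) σ).toLinearMap
  map_one' := by
    have := PiTensorProduct.reindex_refl (R := K) (s := fun _ : Fin p => W)
    exact congrArg LinearEquiv.toLinearMap this
  map_mul' σ τ := by
    refine LinearMap.ext fun x => ?_
    have h := PiTensorProduct.reindex_reindex (R := K) (s := fun _ : Fin p => W) τ σ x
    simpa [Equiv.Perm.mul_def, Module.End.mul_apply] using h.symm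

/-- The algebra homomorphism `φ_p : K[S_p] → End(W^{⊗p})` induced by `σ ↦ L_σ`. -/
noncomputable def permAlgHom (K : Type u) [Field K] (W : Type u) [AddCommGroup W] [Module K W]
    (p : ℕ) :
    MonoidAlgebra K (Equiv.Perm (Fin p)) →ₐ[K] Module.End K (⨂[K] (_ : Fin p), W) :=
  MonoidAlgebra.lift K (Module.End K (⨂[K] (_ : Fin p), W)) (Equiv.Perm (Fin p))
    (permRep K W p)

/-- The antisymmetrizer `A_{n+1} = (1/(n+1)!) Σ_{σ ∈ S_{n+1}} sgn(σ) σ`, where `S_{n+1}`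
is embedded in `S_p` as the permutations fixing the letters `n+2, …, p`. -/
noncomputable def antisymmetrizer (K : Type u) [Field K] (n p : ℕ) (h : n + 1 ≤ p) :
    MonoidAlgebra K (Equiv.Perm (Fin p)) :=
  ((Nat.factorial (n + 1) : K)⁻¹) •
    ∑ σ : Equiv.Perm (Fin (n + 1)),
      (((Equiv.Perm.sign σ : ℤ) : K) •
        MonoidAlgebra.of K (Equiv.Perm (Fin p))
          (σ.viaFintypeEmbedding (Fin.castLEEmb h)))

namespace Equiv.Perm

section viaFintypeEmbedding

variable {α β : Type*} [Fintype α] [DecidableEq β]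

theorem viaFintypeEmbedding_mul (s : α ↪ β) (σ τ : Perm α) :
    (σ * τ).viaFintypeEmbedding s = σ.viaFintypeEmbedding s * τ.viaFintypeEmbedding s :=
  (extendDomain_mul _ σ τ).symm

theorem viaFintypeEmbedding_one (s : α ↪ β) :
    (1 : Perm α).viaFintypeEmbedding s = 1 :=
  extendDomain_one _

theorem viaFintypeEmbedding_ne_one (s : α ↪ β) {τ : Perm α} (hτ : τ ≠ 1) :
    τ.viaFintypeEmbedding s ≠ 1 := by
  obtain ⟨k, hk⟩ := not_forall.mp (mt Equiv.ext hτ)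
  intro h
  exact hk (s.injective (by simpa [h] using (viaFintypeEmbedding_apply_image τ s k).symm))

theorem viaFintypeEmbedding_swap [DecidableEq α] (s : α ↪ β) (k l : α) :
    (swap k l).viaFintypeEmbedding s = swap (s k) (s l) := by
  ext x
  by_cases hx : x ∈ Set.range s
  · obtain ⟨a, rfl⟩ := hx
    rw [viaFintypeEmbedding_apply_image, s.injective.swap_apply]
  · rw [viaFintypeEmbedding_apply_notMem_range _ _ hx,
      swap_apply_of_ne_of_ne (fun h => hx ⟨k, h.symm⟩) (fun h => hx ⟨l, h.symm⟩)]

theorem mul_viaFintypeEmbedding_mul_inv (π : Perm β) (s : α ↪ β) (τ : Perm α) :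
    π * τ.viaFintypeEmbedding s * π⁻¹ = τ.viaFintypeEmbedding (π • s) := by
  ext x
  by_cases hx : x ∈ Set.range (π • s)
  · obtain ⟨k, rfl⟩ := hx
    rw [Perm.mul_apply, Perm.mul_apply, Function.Embedding.smul_apply, Perm.smul_def, Perm.inv_def,
      symm_apply_apply, viaFintypeEmbedding_apply_image]
    exact (viaFintypeEmbedding_apply_image τ (π • s) k).symm
  · have hx' : π⁻¹ x ∉ Set.range s := fun ⟨k, hk⟩ => hx ⟨k, by simp [hk]⟩
    rw [Perm.mul_apply, Perm.mul_apply, viaFintypeEmbedding_apply_notMem_range _ _ hx',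
      viaFintypeEmbedding_apply_notMem_range _ _ hx, Perm.inv_def, apply_symm_apply]

end viaFintypeEmbedding

variable {α : Type*} [LinearOrder α]

def HasIncreasingColoring (n : ℕ) (σ : Perm α) : Prop :=
  ∃ c : α → Fin n, ∀ ⦃i j⦄, i < j → c i = c j → σ i < σ j

theorem hasIncreasingColoring_of_card_le [Fintype α] {n : ℕ} (h : Fintype.card α ≤ n)
    (σ : Perm α) : HasIncreasingColoring n σ :=
  ⟨fun i => Fin.castLE h (Fintype.equivFin α i), fun i j hij hc =>
    absurd (by simpa using hc) hij.ne⟩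

/-- Color `i` by the length `depth i` of the longest decreasing subsequence of `σ` ending at `i`. -/
theorem hasIncreasingColoring_or_exists_strictAnti [Fintype α] (n : ℕ) (σ : Perm α) :
    HasIncreasingColoring n σ ∨ ∃ s : Fin (n + 1) ↪o α, StrictAnti (σ ∘ s) := by
  classical
  let chains (i : α) : Finset (Finset α) :=
    {t | i ∈ t ∧ (∀ j ∈ t, j ≤ i) ∧ StrictAntiOn σ (t : Set α)}
  have mem_chains {i : α} {t : Finset α} :
      t ∈ chains i ↔ i ∈ t ∧ (∀ j ∈ t, j ≤ i) ∧ StrictAntiOn σ (t : Set α) := by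
    simp [chains]
  let depth (i : α) : ℕ := (chains i).sup Finset.card
  have singleton_mem (i : α) : {i} ∈ chains i := mem_chains.mpr (by simp)
  have one_le_depth (i : α) : 1 ≤ depth i := Finset.le_sup (f := Finset.card) (singleton_mem i)
  have exists_chain (i : α) : ∃ t ∈ chains i, t.card = depth i := by
    obtain ⟨t, ht, h⟩ := Finset.exists_mem_eq_sup _ ⟨_, singleton_mem i⟩ Finset.card
    exact ⟨t, ht, h.symm⟩
  by_cases hdeep : ∃ i, n + 1 ≤ depth i
  · obtain ⟨i, hi⟩ := hdeep
    obtain ⟨t, ht, htcard⟩ := exists_chain i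
    obtain ⟨u, hut, hucard⟩ := Finset.exists_subset_card_eq (htcard ▸ hi)
    refine Or.inr ⟨u.orderEmbOfFin hucard, fun a b hab => ?_⟩
    exact (mem_chains.mp ht).2.2 (hut (u.orderEmbOfFin_mem hucard a))
      (hut (u.orderEmbOfFin_mem hucard b))
      ((u.orderEmbOfFin hucard).strictMono hab)
  · push Not at hdeep
    refine Or.inl ⟨fun i => ⟨depth i - 1, Nat.sub_one_lt_of_le (one_le_depth i)
      (Nat.lt_succ_iff.mp (hdeep i))⟩, fun i j hij hc => ?_⟩
    have hdepth : depth i = depth j := by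
      have := one_le_depth i; have := one_le_depth j; simp only [Fin.mk.injEq] at hc; omega
    refine lt_of_le_of_ne (not_lt.mp fun hji => ?_) (σ.injective.ne hij.ne)
    obtain ⟨t, ht, htcard⟩ := exists_chain i
    obtain ⟨hit, htle, htanti⟩ := mem_chains.mp ht
    have hσ (a) (ha : a ∈ t) : σ i ≤ σ a := htanti.antitoneOn ha hit (htle a ha)
    have htj (a) (ha : a ∈ t) : a ≤ j := ((htle a ha).trans_lt hij).le
    have hinsert : insert j t ∈ chains j := by
      refine mem_chains.mpr ⟨t.mem_insert_self j, by simpa using htj, ?_⟩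
      rw [Finset.coe_insert, strictAntiOn_insert_iff_of_forall_le htj]
      exact ⟨fun a ha _ => hji.trans_le (hσ a ha), htanti⟩
    have hlt : (insert j t).card ≤ depth j := Finset.le_sup (f := Finset.card) hinsert
    rw [Finset.card_insert_of_notMem fun hjt => (htle j hjt).not_gt hij] at hlt
    omega

theorem not_toLex_lt_of_comp_inv_eq {γ : Type*} {σ₀ σ : Perm α} {c : α → γ}
    (hc : ∀ ⦃i j⦄, i < j → c i = c j → σ₀ i < σ₀ j) (h : c ∘ ⇑σ⁻¹ = c ∘ ⇑σ₀⁻¹) :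
    ¬ toLex ⇑σ < toLex ⇑σ₀ := by
  rintro ⟨i, hagree, hlt⟩
  obtain ⟨j, hj⟩ : ∃ j, σ₀.symm (σ i) = j := ⟨_, rfl⟩
  have hσ₀j : σ₀ j = σ i := hj ▸ σ₀.apply_symm_apply _
  have hcj : c i = c j := by simpa [hj] using congrFun h (σ i)
  rcases lt_trichotomy i j with hij | rfl | hji
  · exact (hc hij hcj).not_gt (hσ₀j ▸ hlt)
  · exact hlt.ne hσ₀j.symm
  · exact hji.ne (σ.injective ((hagree j hji).trans hσ₀j : σ j = σ i))

theorem lt_apply_of_forall_lt_apply_eq {π : Perm α} {i : α} (hfix : ∀ j < i, π j = j)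
    (hi : π i ≠ i) : i < π i :=
  hi.symm.lt_of_le <| not_lt.mp fun hlt => hi (π.injective (hfix _ hlt))

theorem toLex_mul_viaFintypeEmbedding_lt [Fintype α] {m : ℕ} (σ : Perm α) (s : Fin m ↪o α)
    (hs : StrictAnti (σ ∘ s)) {τ : Perm (Fin m)} (hτ : τ ≠ 1) :
    toLex ⇑(σ * τ.viaFintypeEmbedding s.toEmbedding) < toLex ⇑σ := by
  set τ' := τ.viaFintypeEmbedding s.toEmbedding
  refine lt_of_le_of_ne (not_lt.mp ?_) fun h => viaFintypeEmbedding_ne_one _ hτ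
    (mul_eq_left.mp (DFunLike.coe_injective (toLex.injective h)))
  rintro ⟨i, hagree, hlt⟩
  have hmoved : τ' i ≠ i := fun h => hlt.ne (by simp [h])
  obtain ⟨k, rfl⟩ : i ∈ Set.range s := by
    by_contra hk
    exact hmoved (viaFintypeEmbedding_apply_notMem_range _ _ hk)
  have hτ'k : τ' (s k) = s (τ k) := viaFintypeEmbedding_apply_image τ s.toEmbedding k
  have hk : s k < s (τ k) :=
    hτ'k ▸ lt_apply_of_forall_lt_apply_eq (fun j hj => σ.injective (hagree j hj).symm) hmoved
  exact (hs (s.lt_iff_lt.mp hk)).not_gt (by simpa [hτ'k] using hlt)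

end Equiv.Perm

open Equiv Equiv.Perm MonoidAlgebra PiTensorProduct

section PermutationRepresentation

variable {K : Type u} [Field K] {W : Type u} [AddCommGroup W] [Module K W] {p : ℕ}

theorem permRep_apply_tprod (σ : Perm (Fin p)) (v : Fin p → W) :
    permRep K W p σ (tprod K v) = tprod K (v ∘ ⇑σ⁻¹) :=
  reindex_tprod (R := K) σ v

theorem permAlgHom_single (σ : Perm (Fin p)) (c : K) :
    permAlgHom K W p (single σ c) = c • permRep K W p σ :=
  lift_single _ _ _

theorem permAlgHom_apply_tprod (a : MonoidAlgebra K (Perm (Fin p))) (v : Fin p → W) :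
    permAlgHom K W p a (tprod K v) = ∑ σ, a.coeff σ • tprod K (v ∘ ⇑σ⁻¹) := by
  conv_lhs => rw [← sum_coeff_single a]
  rw [Finsupp.sum, map_sum, LinearMap.sum_apply,
    Finset.sum_subset (Finset.subset_univ _) fun σ _ hσ => by
      simp [Finsupp.notMem_support_iff.mp hσ]]
  simp only [permAlgHom_single, LinearMap.smul_apply, permRep_apply_tprod]

/-- The sum is the coordinate of `φ(a) (b ∘ f)` along the basis tensor `b ∘ g`. -/
theorem sum_coeff_eq_zero_of_permAlgHom_eq_zero {ι : Type*} [DecidableEq ι]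
    (b : Module.Basis ι K W) {a : MonoidAlgebra K (Perm (Fin p))} (ha : permAlgHom K W p a = 0) (f g : Fin p → ι) :
    ∑ σ ∈ Finset.univ.filter (fun σ : Perm (Fin p) => f ∘ ⇑σ⁻¹ = g), a.coeff σ = 0 := by
  have := congrArg (fun x => (Basis.piTensorProduct fun _ => b).repr x g)
    (LinearMap.congr_fun ha (tprod K fun i => b (f i)))
  simpa [permAlgHom_apply_tprod, Finset.sum_filter, Finsupp.single_apply, Finset.prod_boole,
    ← funext_iff, Function.comp_def] using this

theorem eq_zero_of_mem_supported_of_permAlgHom_eq_zero {n : ℕ} (b : Module.Basis (Fin n) K W)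
    {a : MonoidAlgebra K (Perm (Fin p))}
    (hcol : a ∈ supported K K {σ | HasIncreasingColoring n σ}) (ha : permAlgHom K W p a = 0) :
    a = 0 := by
  by_contra ha0
  obtain ⟨σ₀, hσ₀, hmax⟩ := a.coeff.support.exists_max_image (fun σ => toLex ⇑σ)
    (Finsupp.support_nonempty_iff.mpr (by simpa using ha0))
  obtain ⟨c, hc⟩ := mem_supported.mp hcol hσ₀
  have hfiber : ∑ σ ∈ Finset.univ.filter (fun σ : Perm (Fin p) => c ∘ ⇑σ⁻¹ = c ∘ ⇑σ₀⁻¹),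
      a.coeff σ = a.coeff σ₀ := by
    refine Finset.sum_eq_single_of_mem _ (by simp) fun σ hσ hne => ?_
    by_contra hσ_supp
    exact hne (DFunLike.coe_injective (toLex.injective (le_antisymm
      (hmax σ (Finsupp.mem_support_iff.mpr hσ_supp))
      (not_lt.mp (not_toLex_lt_of_comp_inv_eq hc (Finset.mem_filter.mp hσ).2)))))
  exact Finsupp.mem_support_iff.mp hσ₀
    (hfiber ▸ sum_coeff_eq_zero_of_permAlgHom_eq_zero b ha c (c ∘ ⇑σ₀⁻¹))

end PermutationRepresentation

section Antisymmetrizer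

variable (K : Type u) [Field K] {p m : ℕ}

/-- The unnormalized antisymmetrizer `∑_{τ ∈ S_m} sgn(τ) τ` of the letters `s 0, …, s (m-1)`. -/
noncomputable def antisymmetrizerOn (s : Fin m ↪ Fin p) : MonoidAlgebra K (Perm (Fin p)) :=
  ∑ τ : Perm (Fin m), ((sign τ : ℤ) : K) • single (τ.viaFintypeEmbedding s) 1

variable {K}

theorem antisymmetrizer_eq_smul_antisymmetrizerOn {n : ℕ} (h : n + 1 ≤ p) :
    antisymmetrizer K n p h = ((n + 1).factorial : K)⁻¹ • antisymmetrizerOn K (Fin.castLEEmb h) :=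
  rfl

theorem single_mul_antisymmetrizerOn_mul_single_inv (π : Perm (Fin p)) (s : Fin m ↪ Fin p) :
    single π 1 * antisymmetrizerOn K s * single π⁻¹ 1 = antisymmetrizerOn K (π • s) := by
  simp only [antisymmetrizerOn, Finset.mul_sum, Finset.sum_mul, mul_smul_comm, smul_mul_assoc,
    single_mul_single, mul_one, mul_viaFintypeEmbedding_mul_inv]

theorem antisymmetrizerOn_mem_span [CharZero K] {n : ℕ} (h : n + 1 ≤ p)
    (s : Fin (n + 1) ↪ Fin p) :
    antisymmetrizerOn K s ∈ TwoSidedIdeal.span {antisymmetrizer K n p h} := by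
  obtain ⟨π, rfl⟩ := exists_smul_eq_embedding (Fin.castLEEmb h) s
  have hA : antisymmetrizerOn K (Fin.castLEEmb h) =
      ((n + 1).factorial : K) • antisymmetrizer K n p h := by
    rw [antisymmetrizer_eq_smul_antisymmetrizerOn,
      smul_inv_smul₀ (Nat.cast_ne_zero.mpr (Nat.factorial_ne_zero _))]
  rw [← single_mul_antisymmetrizerOn_mul_single_inv, hA, Algebra.smul_def]
  exact TwoSidedIdeal.mul_mem_right _ _ _ (TwoSidedIdeal.mul_mem_left _ _ _
    (TwoSidedIdeal.mul_mem_left _ _ _ (TwoSidedIdeal.subset_span rfl)))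

end Antisymmetrizer

section Kernel

variable {K : Type u} [Field K] {W : Type u} [AddCommGroup W] [Module K W] {p m : ℕ}

theorem permAlgHom_antisymmetrizerOn [FiniteDimensional K W] (s : Fin m ↪ Fin p)
    (hm : Module.finrank K W < m) : permAlgHom K W p (antisymmetrizerOn K s) = 0 := by
  let b := Module.finBasis K W
  refine (Basis.piTensorProduct fun _ : Fin p => b).ext fun f => ?_
  rw [Basis.piTensorProduct_apply, LinearMap.zero_apply]
  -- two letters of `s` carry the same basis vector, so `τ ↦ τ * swap k l` pairs off terms
  -- of opposite sign
  obtain ⟨k, l, hkl, hf⟩ : ∃ k l, k ≠ l ∧ f (s k) = f (s l) :=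
    Fintype.exists_ne_map_eq_of_card_lt (f ∘ s) (by simpa using hm)
  have hfix : permRep K W p ((swap k l).viaFintypeEmbedding s) (tprod K fun i => b (f i)) =
      tprod K fun i => b (f i) := by
    have hf' : f ∘ swap (s k) (s l) = f := by
      rw [comp_swap_eq_update, hf, Function.update_eq_self, ← hf, Function.update_eq_self]
    rw [permRep_apply_tprod, viaFintypeEmbedding_swap, swap_inv]
    exact congrArg (PiTensorProduct.tprod K) (congrArg (b ∘ ·) hf')
  simp only [antisymmetrizerOn, map_sum, map_smul, permAlgHom_single, one_smul,
    LinearMap.sum_apply, LinearMap.smul_apply]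
  refine Finset.sum_ninvolution (· * swap k l) (fun τ => ?_) (fun τ _ h => hkl ?_)
    (fun _ => Finset.mem_univ _) (fun τ => by simp [mul_assoc])
  · rw [viaFintypeEmbedding_mul, map_mul (permRep K W p), Module.End.mul_apply, hfix,
      Perm.sign_mul, sign_swap hkl]
    simp
  · simpa using congr($(mul_eq_left.mp h) l)

theorem permAlgHom_eq_zero_of_mem_span [FiniteDimensional K W] {n : ℕ}
    (hn : Module.finrank K W = n) (h : n + 1 ≤ p) {a : MonoidAlgebra K (Perm (Fin p))}
    (ha : a ∈ TwoSidedIdeal.span {antisymmetrizer K n p h}) : permAlgHom K W p a = 0 := by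
  refine (TwoSidedIdeal.mem_ker _).mp (TwoSidedIdeal.span_le.mpr ?_ ha)
  rintro _ rfl
  rw [SetLike.mem_coe, TwoSidedIdeal.mem_ker, antisymmetrizer_eq_smul_antisymmetrizerOn, map_smul,
    permAlgHom_antisymmetrizerOn _ (by omega), smul_zero]

end Kernel

section Spanning

variable {K : Type u} [Field K] {p m : ℕ}

theorem single_mul_antisymmetrizerOn (σ : Perm (Fin p)) (s : Fin m ↪ Fin p) :
    single σ 1 * antisymmetrizerOn K s = single σ 1 +
      ∑ τ ∈ Finset.univ.erase 1, ((sign τ : ℤ) : K) • single (σ * τ.viaFintypeEmbedding s) 1 := by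
  rw [antisymmetrizerOn, Finset.mul_sum, ← Finset.add_sum_erase _ _ (Finset.mem_univ 1)]
  simp only [mul_smul_comm, single_mul_single, mul_one, viaFintypeEmbedding_one, map_one,
    Units.val_one, Int.cast_one, one_smul]

theorem mem_span_antisymmetrizer_sup_supported [CharZero K] {n : ℕ} (h : n + 1 ≤ p)
    (a : MonoidAlgebra K (Perm (Fin p))) :
    a ∈ (TwoSidedIdeal.span {antisymmetrizer K n p h}).asIdeal.restrictScalars K ⊔
      supported K K {σ | HasIncreasingColoring n σ} := by
  set M := (TwoSidedIdeal.span {antisymmetrizer K n p h}).asIdeal.restrictScalars K ⊔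
      supported K K {σ : Perm (Fin p) | HasIncreasingColoring n σ}
  induction a using MonoidAlgebra.induction_linear with
  | zero => exact M.zero_mem
  | add x y hx hy => exact M.add_mem hx hy
  | single σ c =>
    rw [← mul_one c, ← smul_single']
    refine M.smul_mem c ?_
    induction σ using (InvImage.wf (fun σ : Perm (Fin p) => toLex ⇑σ) wellFounded_lt).induction
      with | _ σ ih
    rcases hasIncreasingColoring_or_exists_strictAnti n σ with hcol | ⟨s, hs⟩
    · refine Submodule.mem_sup_right ?_
      rw [supported_eq_span_single]
      exact Submodule.subset_span ⟨σ, hcol, rfl⟩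
    · rw [eq_sub_of_add_eq (single_mul_antisymmetrizerOn σ s.toEmbedding).symm]
      refine M.sub_mem (Submodule.mem_sup_left ?_) (M.sum_mem fun τ hτ => M.smul_mem _ ?_)
      · exact TwoSidedIdeal.mem_asIdeal.mpr
          (TwoSidedIdeal.mul_mem_left _ _ _ (antisymmetrizerOn_mem_span h _))
      · exact ih _ (toLex_mul_viaFintypeEmbedding_lt σ s hs (Finset.ne_of_mem_erase hτ))

end Spanning

theorem permAlgHom_injective_or_kernel_antisymmetrizer_general
    (K : Type u) [Field K] [CharZero K]
    (W : Type u) [AddCommGroup W] [Module K W] [FiniteDimensional K W]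
    (n : ℕ) (hn : Module.finrank K W = n) (p : ℕ) :
    (p ≤ n → Function.Injective (permAlgHom K W p)) ∧
    (∀ h : n + 1 ≤ p, ∀ a : MonoidAlgebra K (Equiv.Perm (Fin p)),
      permAlgHom K W p a = 0 ↔ a ∈ TwoSidedIdeal.span {antisymmetrizer K n p h}) := by
  let b : Module.Basis (Fin n) K W := Module.finBasisOfFinrankEq K W hn
  refine ⟨fun hp => (injective_iff_map_eq_zero _).mpr fun a => ?_,
    fun h a => ⟨fun ha => ?_, permAlgHom_eq_zero_of_mem_span hn h⟩⟩
  · refine eq_zero_of_mem_supported_of_permAlgHom_eq_zero b (mem_supported.mpr fun σ _ => ?_)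
    exact hasIncreasingColoring_of_card_le (by simpa using hp) σ
  · obtain ⟨x, hx, y, hy, rfl⟩ := Submodule.mem_sup.mp (mem_span_antisymmetrizer_sup_supported h a)
    have hx : x ∈ TwoSidedIdeal.span {antisymmetrizer K n p h} := TwoSidedIdeal.mem_asIdeal.mp hx
    rw [map_add, permAlgHom_eq_zero_of_mem_span hn h hx, zero_add] at ha
    rwa [eq_zero_of_mem_supported_of_permAlgHom_eq_zero b hy ha, add_zero]

/-- `φ_p : K[S_p] → End(W^{⊗p})` is injective when `p ≤ n = dim W`, and for
`p > n` its kernel is the two-sided ideal generated by the antisymmetrizer `A_{n+1}`. -/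
theorem permAlgHom_injective_or_kernel_antisymmetrizer
    (K : Type u) [Field K] [IsAlgClosed K] [CharZero K]
    (W : Type u) [AddCommGroup W] [Module K W] [FiniteDimensional K W]
    (n : ℕ) (hn : Module.finrank K W = n) (p : ℕ) :
    (p ≤ n → Function.Injective (permAlgHom K W p)) ∧
    (∀ h : n + 1 ≤ p, ∀ a : MonoidAlgebra K (Equiv.Perm (Fin p)),
      permAlgHom K W p a = 0 ↔ a ∈ TwoSidedIdeal.span {antisymmetrizer K n p h}) :=
  permAlgHom_injective_or_kernel_antisymmetrizer_general K W n hn p
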